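/- arXiv:1502.00955 — 5 statements merged into one kernel-verified Lean document; each statement's English description precedes it below -/
import Mathlib

section
/- The numerical range F(A) of any complex n-by-n matrix A is convex (Toeplitz–Hausdorff theorem). -/
/-!
An affine change `T ↦ c • T + d • id` moves two points of the numerical range `W(T)` to `1` and
`0`, so it suffices to show `[0, 1] ⊆ W(T)` when `⟪x, T x⟫ = 1` and `⟪y, T y⟫ = 0` for unit
vectors `x`, `y`. After multiplying `x` by a unimodular scalar, the cross term
`⟪x, T y⟫ + ⟪y, T x⟫` is real, so `⟪u, T u⟫` is real for every `u` in the real span of `x` and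
`y`. Along the segment from `x` to `y`, which avoids `0`, the Rayleigh quotient
`⟪u, T u⟫ / ‖u‖²` then runs continuously through real values from `1` to `0`, and the
intermediate value theorem gives every `p ∈ [0, 1]`.
-/

open Matrix

open scoped InnerProductSpace ComplexConjugate

theorem ofReal_smul_add_ofReal_smul_ne_zero {F : Type*} [NormedAddCommGroup F] [NormedSpace ℂ F]
    {x y : F} (hx : ‖x‖ = 1) (hy : ‖y‖ = 1) (hxy : x ≠ -y) {t : ℝ} (ht : t ∈ Set.Icc (0 : ℝ) 1) :
    ((1 - t : ℝ) : ℂ) • x + (t : ℂ) • y ≠ 0 := by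
  intro h
  have hsmul : ((1 - t : ℝ) : ℂ) • x = ((t : ℝ) : ℂ) • -y := by
    rw [smul_neg, ← eq_neg_iff_add_eq_zero.mpr h]
  have hnorm : 1 - t = t := by
    have := congrArg norm hsmul
    rwa [norm_smul, norm_smul, norm_neg, hx, hy, Complex.norm_real, Complex.norm_real,
      Real.norm_of_nonneg (sub_nonneg.mpr ht.2), Real.norm_of_nonneg ht.1, mul_one, mul_one] at this
  rw [hnorm] at hsmul
  exact hxy (smul_right_injective F (by norm_cast; linarith) hsmul)

namespace LinearMap

variable {E : Type*} [NormedAddCommGroup E] [InnerProductSpace ℂ E]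

def numericalRange (T : E →ₗ[ℂ] E) : Set ℂ :=
  {z | ∃ x, ‖x‖ = 1 ∧ ⟪x, T x⟫_ℂ = z}

variable (T : E →ₗ[ℂ] E)

theorem inner_map_self_div_norm_sq_mem_numericalRange {x : E} (hx : x ≠ 0) :
    ⟪x, T x⟫_ℂ / (‖x‖ : ℂ) ^ 2 ∈ T.numericalRange := by
  refine ⟨((‖x‖⁻¹ : ℝ) : ℂ) • x, by simpa using norm_smul_inv_norm (𝕜 := ℂ) hx, ?_⟩
  simp only [map_smul, inner_smul_left, inner_smul_right, Complex.conj_ofReal]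
  push_cast
  field_simp

theorem numericalRange_smul_add_smul_id (c d : ℂ) :
    (c • T + d • LinearMap.id).numericalRange = (fun z => c * z + d) '' T.numericalRange := by
  ext z
  constructor
  · rintro ⟨x, hx, rfl⟩
    refine ⟨_, ⟨x, hx, rfl⟩, ?_⟩
    simp [inner_self_eq_norm_sq_to_K, hx]
  · rintro ⟨_, ⟨x, hx, rfl⟩, rfl⟩
    refine ⟨x, hx, ?_⟩
    simp [inner_self_eq_norm_sq_to_K, hx]

theorem inner_map_self_ofReal_smul_add_ofReal_smul (x y : E) (s t : ℝ) :
    ⟪(s : ℂ) • x + (t : ℂ) • y, T ((s : ℂ) • x + (t : ℂ) • y)⟫_ℂ =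
      s ^ 2 * ⟪x, T x⟫_ℂ + t ^ 2 * ⟪y, T y⟫_ℂ + s * t * (⟪x, T y⟫_ℂ + ⟪y, T x⟫_ℂ) := by
  simp only [map_add, map_smul, inner_add_left, inner_add_right, inner_smul_left,
    inner_smul_right, Complex.conj_ofReal]
  ring

theorem exists_norm_eq_one_inner_cross_im_eq_zero (x y : E) :
    ∃ ω : ℂ, ‖ω‖ = 1 ∧ (⟪ω • x, T y⟫_ℂ + ⟪y, T (ω • x)⟫_ℂ).im = 0 := by
  set w := ⟪x, T y⟫_ℂ - conj ⟪y, T x⟫_ℂ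
  have him : ∀ ω : ℂ, (⟪ω • x, T y⟫_ℂ + ⟪y, T (ω • x)⟫_ℂ).im = (conj ω * w).im := by
    intro ω
    simp only [w, map_smul, inner_smul_left, inner_smul_right, mul_sub, Complex.sub_im,
      Complex.add_im, ← map_mul, Complex.conj_im]
    ring
  rcases eq_or_ne w 0 with hw | hw
  · exact ⟨1, by simp, by rw [him, hw, mul_zero, Complex.zero_im]⟩
  · refine ⟨w / (‖w‖ : ℂ), by simp [hw], ?_⟩
    rw [him, map_div₀, Complex.conj_ofReal, div_mul_eq_mul_div, Complex.conj_mul']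
    norm_cast

theorem ofReal_mem_numericalRange_of_one_mem_of_zero_mem (h1 : 1 ∈ T.numericalRange)
    (h0 : 0 ∈ T.numericalRange) {p : ℝ} (hp : p ∈ Set.Icc (0 : ℝ) 1) :
    (p : ℂ) ∈ T.numericalRange := by
  obtain ⟨x₀, hx₀, hTx₀⟩ := h1
  obtain ⟨y, hy, hTy⟩ := h0
  obtain ⟨ω, hω, hcross⟩ := exists_norm_eq_one_inner_cross_im_eq_zero T x₀ y
  set x := ω • x₀
  have hx : ‖x‖ = 1 := by rw [norm_smul, hω, hx₀, one_mul]
  have hTx : ⟪x, T x⟫_ℂ = 1 := by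
    rw [map_smul, inner_smul_left, inner_smul_right, ← mul_assoc, Complex.conj_mul', hω, hTx₀]
    norm_num
  have hxy : x ≠ -y := by
    rintro hxy
    simp [hxy, hTy] at hTx
  set u : ℝ → E := fun t => ((1 - t : ℝ) : ℂ) • x + (t : ℂ) • y
  set c := (⟪x, T y⟫_ℂ + ⟪y, T x⟫_ℂ).re
  have hc : ⟪x, T y⟫_ℂ + ⟪y, T x⟫_ℂ = c := Complex.ext rfl hcross
  have hTu : ∀ t : ℝ, ⟪u t, T (u t)⟫_ℂ = (((1 - t) ^ 2 + (1 - t) * t * c : ℝ) : ℂ) := by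
    intro t
    rw [inner_map_self_ofReal_smul_add_ofReal_smul, hTx, hTy, hc]
    push_cast
    ring
  have hu : ∀ t ∈ Set.Icc (0 : ℝ) 1, u t ≠ 0 := fun t ht =>
    ofReal_smul_add_ofReal_smul_ne_zero hx hy hxy ht
  set f : ℝ → ℝ := fun t => ((1 - t) ^ 2 + (1 - t) * t * c) / ‖u t‖ ^ 2
  have hf : ContinuousOn f (Set.Icc 0 1) :=
    ContinuousOn.div (by fun_prop) (by fun_prop) fun t ht => by simpa using hu t ht
  obtain ⟨t, ht, hft⟩ := intermediate_value_Icc' zero_le_one hf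
    (show p ∈ Set.Icc (f 1) (f 0) by simpa [f, u, hx, hy] using hp)
  convert inner_map_self_div_norm_sq_mem_numericalRange T (hu t ht) using 1
  rw [hTu, ← hft]
  push_cast [f]
  rfl

theorem convex_numericalRange : Convex ℝ T.numericalRange := by
  rintro a ha b hb p q hp hq hpq
  rcases eq_or_ne a b with rfl | hab
  · rwa [← add_smul, hpq, one_smul]
  have hab' : a - b ≠ 0 := sub_ne_zero.mpr hab
  set S := (a - b)⁻¹ • T + (-((a - b)⁻¹ * b)) • LinearMap.id
  have hS : ∀ z ∈ T.numericalRange, (a - b)⁻¹ * z + -((a - b)⁻¹ * b) ∈ S.numericalRange := by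
    intro z hz
    rw [numericalRange_smul_add_smul_id]
    exact ⟨z, hz, rfl⟩
  have h1 : (1 : ℂ) ∈ S.numericalRange := by
    convert hS a ha using 1
    rw [← sub_eq_add_neg, ← mul_sub, inv_mul_cancel₀ hab']
  have h0 : (0 : ℂ) ∈ S.numericalRange := by
    convert hS b hb using 1
    rw [add_neg_cancel]
  obtain ⟨z, hz, hzp⟩ := (numericalRange_smul_add_smul_id T _ _).subset
    (ofReal_mem_numericalRange_of_one_mem_of_zero_mem S h1 h0 ⟨hp, by linarith⟩)
  convert hz using 1
  rw [Complex.real_smul, Complex.real_smul, show q = 1 - p by linarith]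
  field_simp at hzp
  push_cast
  linear_combination -hzp

end LinearMap

theorem Matrix.numericalRange_toLpLin {ι : Type*} [Fintype ι] [DecidableEq ι]
    (A : Matrix ι ι ℂ) :
    (Matrix.toLpLin 2 2 A : EuclideanSpace ℂ ι →ₗ[ℂ] EuclideanSpace ℂ ι).numericalRange =
      {z | ∃ x : ι → ℂ, star x ⬝ᵥ x = 1 ∧ star x ⬝ᵥ (A *ᵥ x) = z} := by
  have hnorm : ∀ x : ι → ℂ, star x ⬝ᵥ x = 1 ↔ ‖WithLp.toLp 2 x‖ = 1 := fun x => by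
    rw [dotProduct_comm, ← EuclideanSpace.inner_toLp_toLp, inner_self_eq_norm_sq_to_K,
      ← RCLike.ofReal_pow, ← RCLike.ofReal_one (K := ℂ), RCLike.ofReal_inj]
    exact pow_eq_one_iff_of_nonneg (norm_nonneg (WithLp.toLp 2 x)) two_ne_zero
  ext z
  constructor
  · rintro ⟨x, hx, rfl⟩
    exact ⟨WithLp.ofLp x, (hnorm _).mpr hx, dotProduct_comm _ _⟩
  · rintro ⟨x, hx, rfl⟩
    exact ⟨WithLp.toLp 2 x, (hnorm x).mp hx, dotProduct_comm _ _⟩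

/-- Toeplitz–Hausdorff: the numerical range is convex. -/
theorem numericalRange_convex (n : ℕ) (A : Matrix (Fin n) (Fin n) ℂ) :
    Convex ℝ {z : ℂ | ∃ x : Fin n → ℂ, star x ⬝ᵥ x = 1 ∧ star x ⬝ᵥ (A *ᵥ x) = z} :=
  A.numericalRange_toLpLin ▸ (Matrix.toLpLin 2 2 A).convex_numericalRange
end

section
/- Suppose x(θ) is a differentiable family of unit vectors with Re(e^{-iθ}A)x(θ) = λ(θ)x(θ) where λ(θ) = x(θ)*Re(e^{-iθ}A)x(θ). Then the critical curve z(θ) = x(θ)*A x(θ) satisfies z(θ) = e^{iθ}(λ(θ) + i·λ'(θ)). -/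
/-!
Write `w θ = e^{-iθ} z(θ) = x(θ)* (e^{-iθ}A) x(θ)`. Since `x(θ)` is a unit eigenvector of
`Re(e^{-iθ}A)`, `λ(θ) = Re w(θ)`. Differentiating, the contribution of `x'(θ)` has real part
`2λ(θ) Re(x'(θ)* x(θ)) = 0` (the Rayleigh quotient is stationary at an eigenvector and `‖x‖ = 1`),
so `λ'(θ) = Re(-i w(θ)) = Im w(θ)`. Hence `w = λ + iλ'`.
-/

open Matrix

section Calculus

variable {ι 𝕜 : Type*} [Fintype ι] [RCLike 𝕜] {x y : ℝ → ι → 𝕜} {x' y' : ι → 𝕜} {t : ℝ}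

theorem HasDerivAt.star_dotProduct (hx : HasDerivAt x x' t) (hy : HasDerivAt y y' t) :
    HasDerivAt (fun s => star (x s) ⬝ᵥ y s) (star x' ⬝ᵥ y t + star (x t) ⬝ᵥ y') t := by
  have hxi := hasDerivAt_pi.mp hx.star
  have hyi := hasDerivAt_pi.mp hy
  simp only [dotProduct, ← Finset.sum_add_distrib]
  exact HasDerivAt.fun_sum fun i _ => (hxi i).mul (hyi i)

theorem HasDerivAt.const_mulVec (M : Matrix ι ι 𝕜) (hx : HasDerivAt x x' t) :
    HasDerivAt (fun s => M *ᵥ x s) (M *ᵥ x') t := by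
  have hxi := hasDerivAt_pi.mp hx
  exact hasDerivAt_pi.mpr fun i => HasDerivAt.fun_sum fun j _ => (hxi j).const_mul (M i j)

theorem re_star_dotProduct_eq_zero_of_hasDerivAt (hunit : ∀ s, star (x s) ⬝ᵥ x s = 1)
    (hx : HasDerivAt x x' t) : RCLike.re (star x' ⬝ᵥ x t) = 0 := by
  have hderiv := hx.star_dotProduct hx
  simp only [hunit] at hderiv
  have hzero := hderiv.unique (hasDerivAt_const t 1)
  rw [star_dotProduct (x t), RCLike.star_def, RCLike.add_conj] at hzero
  simpa using hzero

end Calculus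

section RealPart

variable {ι 𝕜 : Type*} [Fintype ι] [RCLike 𝕜] {M : Matrix ι ι 𝕜} {u v : ι → 𝕜} {μ : ℝ}

theorem re_star_dotProduct_add_conjTranspose_mulVec (M : Matrix ι ι 𝕜) (u w : ι → 𝕜) :
    RCLike.re (star u ⬝ᵥ ((M + Mᴴ) *ᵥ w)) =
      RCLike.re (star u ⬝ᵥ (M *ᵥ w) + star w ⬝ᵥ (M *ᵥ u)) := by
  have hconj : star u ⬝ᵥ (Mᴴ *ᵥ w) = star (star w ⬝ᵥ (M *ᵥ u)) := by
    rw [← star_dotProduct]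
    simp [dotProduct_mulVec, star_mulVec]
  rw [add_mulVec, dotProduct_add, hconj, map_add, map_add, RCLike.star_def, RCLike.conj_re]

theorem add_conjTranspose_mulVec_of_eigen (hu : ((2 : 𝕜)⁻¹ • (M + Mᴴ)) *ᵥ u = (μ : 𝕜) • u) :
    (M + Mᴴ) *ᵥ u = ((2 * μ : ℝ) : 𝕜) • u := by
  rw [smul_mulVec, inv_smul_eq_iff₀ two_ne_zero] at hu
  rw [hu, smul_smul]
  push_cast
  rfl

theorem re_star_dotProduct_mulVec_eq_of_eigen (hu : ((2 : 𝕜)⁻¹ • (M + Mᴴ)) *ᵥ u = (μ : 𝕜) • u)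
    (hunit : star u ⬝ᵥ u = 1) : RCLike.re (star u ⬝ᵥ (M *ᵥ u)) = μ := by
  have h := re_star_dotProduct_add_conjTranspose_mulVec M u u
  rw [add_conjTranspose_mulVec_of_eigen hu, dotProduct_smul, hunit, smul_eq_mul, mul_one,
    RCLike.ofReal_re, map_add] at h
  linarith

/-- Hellmann–Feynman: perturbing a unit eigenvector `u` of `Re M` tangentially to the sphere
does not change `Re (u* M u)` to first order. -/
theorem re_star_dotProduct_mulVec_add_eq_zero_of_eigen
    (hu : ((2 : 𝕜)⁻¹ • (M + Mᴴ)) *ᵥ u = (μ : 𝕜) • u) (hv : RCLike.re (star v ⬝ᵥ u) = 0) :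
    RCLike.re (star v ⬝ᵥ (M *ᵥ u) + star u ⬝ᵥ (M *ᵥ v)) = 0 := by
  rw [← re_star_dotProduct_add_conjTranspose_mulVec, add_conjTranspose_mulVec_of_eigen hu,
    dotProduct_smul, smul_eq_mul, RCLike.re_ofReal_mul, hv, mul_zero]

end RealPart

/-- If x(θ) is a differentiable family of unit eigenvectors of Re(e^{-iθ}A) with
eigenvalue λ(θ), then the critical curve z(θ) = x(θ)*Ax(θ) satisfies
z(θ) = e^{iθ}(λ(θ) + i λ'(θ)). -/
theorem critical_curve_formula (n : ℕ) (A : Matrix (Fin n) (Fin n) ℂ)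
    (x : ℝ → Fin n → ℂ) (lam lam' : ℝ → ℝ)
    (hx : Differentiable ℝ x)
    (hunit : ∀ θ : ℝ, star (x θ) ⬝ᵥ x θ = 1)
    (heig : ∀ θ : ℝ,
      (((2 : ℂ)⁻¹) • (Complex.exp (-(θ : ℂ) * Complex.I) • A +
        (Complex.exp (-(θ : ℂ) * Complex.I) • A)ᴴ)) *ᵥ x θ = (lam θ : ℂ) • x θ)
    (hlam : ∀ θ : ℝ, HasDerivAt lam (lam' θ) θ) :
    ∀ θ : ℝ, star (x θ) ⬝ᵥ (A *ᵥ x θ) =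
      Complex.exp ((θ : ℂ) * Complex.I) * ((lam θ : ℂ) + Complex.I * (lam' θ : ℂ)) := by
  intro θ
  set c : ℝ → ℂ := fun t => Complex.exp (-(t : ℂ) * Complex.I)
  set z : ℝ → ℂ := fun t => star (x t) ⬝ᵥ (A *ᵥ x t)
  set v := deriv x θ
  set z' := star v ⬝ᵥ (A *ᵥ x θ) + star (x θ) ⬝ᵥ (A *ᵥ v)
  have hv : HasDerivAt x v θ := (hx θ).hasDerivAt
  have hz : HasDerivAt z z' θ := hv.star_dotProduct (hv.const_mulVec A)
  have hc : HasDerivAt c (c θ * -Complex.I) θ :=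
    (((hasDerivAt_id θ).ofReal_comp.neg).mul_const Complex.I).cexp.congr_deriv (by simp [c])
  have hlam_eq : lam = fun t => (c t * z t).re := by
    funext t
    rw [← re_star_dotProduct_mulVec_eq_of_eigen (heig t) (hunit t)]
    simp only [z, smul_mulVec, dotProduct_smul, smul_eq_mul, RCLike.re_to_complex]
    rfl
  have hstat : (c θ * z').re = 0 := by
    simpa only [smul_mulVec, dotProduct_smul, smul_eq_mul, ← mul_add, RCLike.re_to_complex] using
      re_star_dotProduct_mulVec_add_eq_zero_of_eigen (heig θ)
        (re_star_dotProduct_eq_zero_of_hasDerivAt hunit hv)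
  have hlam_deriv : HasDerivAt lam (c θ * -Complex.I * z θ + c θ * z').re θ := by
    rw [hlam_eq]
    exact Complex.reCLM.hasFDerivAt.comp_hasDerivAt θ (hc.mul hz)
  have hlam' : lam' θ = (c θ * z θ).im := by
    rw [(hlam θ).unique hlam_deriv, Complex.add_re, hstat]
    simp
  have hcz : c θ * z θ = lam θ + Complex.I * lam' θ := by
    apply Complex.ext <;> simp [hlam', congrFun hlam_eq θ]
  calc z θ = Complex.exp (θ * Complex.I) * (c θ * z θ) := by
        rw [← mul_assoc, ← Complex.exp_add]; simp
    _ = _ := by rw [hcz]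
end

section
/- Let x: I → ℂⁿ be a real-analytic function on an interval I that is not identically zero. Then there exists a continuous function y: I → ℂⁿ such that for every t ∈ I with x(t) ≠ 0, y(t) = x(t)/‖x(t)‖ or y(t) = −x(t)/‖x(t)‖, and ‖y(t)‖ = 1 for all t ∈ I. -/
/-!
Near each point `a` of `I` the identity theorem rules out `x ≡ 0`, so `x t = (t - a) ^ m • u t`
with `u a ≠ 0`, and `u / ‖u‖` is a local continuous choice of `±x / ‖x‖`. Two such choices on an
interval agree up to one global sign: where `x ≠ 0` they agree up to sign, this persists at the
isolated zeros of `x` by continuity, and `‖y₁ - y₂‖ ∈ {0, 2}` is constant on a connected set.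
Hence local choices glue along `I` by a connectedness argument, once the sign is normalized at a
point `t₀` with `x t₀ ≠ 0`.
-/

open Set Filter Topology
open scoped Interval

section IsolatedZeros

variable {𝕜 E : Type*} [NontriviallyNormedField 𝕜] [NormedAddCommGroup E] [NormedSpace 𝕜 E]
  [CompleteSpace E] {f : 𝕜 → E} {s : Set 𝕜} {z₀ : 𝕜}

theorem AnalyticWithinAt.eventually_eq_zero_or_eventually_ne_zero
    (hf : AnalyticWithinAt 𝕜 f s z₀) :
    f =ᶠ[𝓝[s] z₀] 0 ∨ ∀ᶠ z in 𝓝[s \ {z₀}] z₀, f z ≠ 0 := by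
  obtain ⟨g, -, hfg, hg⟩ := hf.exists_analyticAt
  have hfg' : ∀ᶠ z in 𝓝[s] z₀, f z = g z :=
    eventually_nhdsWithin_of_forall fun z hz => hfg (mem_insert_of_mem _ hz)
  refine hg.eventually_eq_zero_or_eventually_ne_zero.imp (fun h => ?_) (fun h => ?_)
  · filter_upwards [hfg', nhdsWithin_le_nhds h] with z hfz hgz
    rw [hfz, hgz, Pi.zero_apply]
  · filter_upwards [nhdsWithin_mono _ sdiff_subset hfg',
      nhdsWithin_mono _ (fun z hz => hz.2) h] with z hfz hgz
    rwa [hfz]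

theorem AnalyticOn.eqOn_zero_of_isPreconnected_of_eventuallyEq_zero (hf : AnalyticOn 𝕜 f s)
    (hs : IsPreconnected s) (hz₀ : z₀ ∈ s) (hfz₀ : f =ᶠ[𝓝[s] z₀] 0) : EqOn f 0 s := by
  intro z hz
  suffices f =ᶠ[𝓝[s] z₀] 0 ↔ f =ᶠ[𝓝[s] z] 0 from (this.1 hfz₀).self_of_nhdsWithin hz
  refine hs.induction₂ (fun a b => f =ᶠ[𝓝[s] a] 0 ↔ f =ᶠ[𝓝[s] b] 0) (fun a ha => ?_)
    (fun _ _ _ _ _ _ => Iff.trans) (fun _ _ _ _ => Iff.symm) hz₀ hz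
  by_cases hfa : f =ᶠ[𝓝[s] a] 0
  · filter_upwards [eventually_eventually_nhdsWithin.2 hfa] with b hfb
    exact iff_of_true hfa hfb
  · have hne := ((hf a ha).eventually_eq_zero_or_eventually_ne_zero.resolve_left hfa)
    rw [sdiff_eq, nhdsWithin_inter', eventually_inf_principal] at hne
    filter_upwards [hne, self_mem_nhdsWithin] with b hfb hb
    rcases eq_or_ne b a with rfl | hba
    · rfl
    · exact iff_of_false hfa fun h => hfb hba (h.self_of_nhdsWithin hb)

theorem AnalyticOn.eventually_ne_zero_of_isPreconnected (hf : AnalyticOn 𝕜 f s)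
    (hs : IsPreconnected s) {z₁ : 𝕜} (hz₁ : z₁ ∈ s) (hfz₁ : f z₁ ≠ 0) (hz₀ : z₀ ∈ s) :
    ∀ᶠ z in 𝓝[s \ {z₀}] z₀, f z ≠ 0 :=
  (hf z₀ hz₀).eventually_eq_zero_or_eventually_ne_zero.resolve_left fun h =>
    hfz₁ (hf.eqOn_zero_of_isPreconnected_of_eventuallyEq_zero hs hz₀ h hz₁)

end IsolatedZeros

section Order

variable {α : Type*} [LinearOrder α] [TopologicalSpace α] [OrderTopology α] {s : Set α}

theorem Set.OrdConnected.nhdsWithin_diff_singleton_neBot [DenselyOrdered α] {a b : α}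
    (hs : s.OrdConnected) (ha : a ∈ s) (hb : b ∈ s) (hab : a ≠ b) : NeBot (𝓝[s \ {a}] a) := by
  rcases hab.lt_or_gt with hab | hba
  · exact (left_nhdsWithin_Ioo_neBot hab).mono <| nhdsWithin_mono _ fun z hz =>
      ⟨hs.out ha hb (Ioo_subset_Icc_self hz), hz.1.ne'⟩
  · exact (right_nhdsWithin_Ioo_neBot hba).mono <| nhdsWithin_mono _ fun z hz =>
      ⟨hs.out hb ha (Ioo_subset_Icc_self hz), hz.2.ne⟩

theorem exists_Icc_mem_nhdsWithin {t : α} (ht : t ∈ s) :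
    ∃ a ∈ s, ∃ b ∈ s, a ≤ t ∧ t ≤ b ∧ Icc a b ∈ 𝓝[s] t := by
  obtain ⟨a, ha, hat, haU⟩ : ∃ a ∈ s, a ≤ t ∧ Ici a ∈ 𝓝[s] t := by
    by_cases h : ∃ a ∈ s, a < t
    · obtain ⟨a, ha, hat⟩ := h
      exact ⟨a, ha, hat.le, nhdsWithin_le_nhds (Ici_mem_nhds hat)⟩
    · push Not at h
      exact ⟨t, ht, le_rfl, mem_of_superset self_mem_nhdsWithin h⟩
  obtain ⟨b, hb, htb, hbU⟩ : ∃ b ∈ s, t ≤ b ∧ Iic b ∈ 𝓝[s] t := by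
    by_cases h : ∃ b ∈ s, t < b
    · obtain ⟨b, hb, htb⟩ := h
      exact ⟨b, hb, htb.le, nhdsWithin_le_nhds (Iic_mem_nhds htb)⟩
    · push Not at h
      exact ⟨t, ht, le_rfl, mem_of_superset self_mem_nhdsWithin h⟩
  exact ⟨a, ha, b, hb, hat, htb, Ici_inter_Iic (a := a) (b := b) ▸ inter_mem haU hbU⟩

end Order

theorem inv_norm_smul_smul_eq_or_eq_neg {E : Type*} [NormedAddCommGroup E] [NormedSpace ℝ E]
    {r : ℝ} (hr : r ≠ 0) (v : E) :
    ‖r • v‖⁻¹ • r • v = ‖v‖⁻¹ • v ∨ ‖r • v‖⁻¹ • r • v = -(‖v‖⁻¹ • v) := by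
  rw [norm_smul, Real.norm_eq_abs, mul_inv, smul_smul, mul_right_comm, mul_smul]
  rcases abs_choice r with h | h <;> simp [h, hr]

section SignSelection

variable {α E : Type*} [TopologicalSpace α] [NormedAddCommGroup E] [NormedSpace ℝ E]
  {x y y₁ y₂ : α → E} {S T : Set α}

structure IsSignSelection (x : α → E) (S : Set α) (y : α → E) : Prop where
  continuousOn : ContinuousOn y S
  eq_or_eq_neg : ∀ t ∈ S, x t ≠ 0 → y t = ‖x t‖⁻¹ • x t ∨ y t = -(‖x t‖⁻¹ • x t)
  norm_eq_one : ∀ t ∈ S, ‖y t‖ = 1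

namespace IsSignSelection

theorem mono (h : IsSignSelection x S y) (hTS : T ⊆ S) : IsSignSelection x T y :=
  ⟨h.continuousOn.mono hTS, fun t ht => h.eq_or_eq_neg t (hTS ht),
    fun t ht => h.norm_eq_one t (hTS ht)⟩

theorem congr (h : IsSignSelection x S y₁) (hy : EqOn y₂ y₁ S) : IsSignSelection x S y₂ :=
  ⟨h.continuousOn.congr hy, fun t ht => hy ht ▸ h.eq_or_eq_neg t ht,
    fun t ht => hy ht ▸ h.norm_eq_one t ht⟩

theorem neg (h : IsSignSelection x S y) : IsSignSelection x S (-y) :=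
  ⟨h.continuousOn.neg, fun t ht hxt => (h.eq_or_eq_neg t ht hxt).symm.imp
    (fun h' => by simp [h']) (fun h' => by simp [h']), fun t ht => by simp [h.norm_eq_one t ht]⟩

theorem union (h₁ : IsSignSelection x S y) (h₂ : IsSignSelection x T y) (hS : IsClosed S)
    (hT : IsClosed T) : IsSignSelection x (S ∪ T) y :=
  ⟨h₁.continuousOn.union_of_isClosed h₂.continuousOn hS hT,
    fun t ht => ht.elim (h₁.eq_or_eq_neg t) (h₂.eq_or_eq_neg t),
    fun t ht => ht.elim (h₁.norm_eq_one t) (h₂.norm_eq_one t)⟩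

theorem piecewise [∀ t, Decidable (t ∈ S)] (h₁ : IsSignSelection x S y₁)
    (h₂ : IsSignSelection x T y₂) (hS : IsClosed S) (hT : IsClosed T) (h : EqOn y₁ y₂ (S ∩ T)) :
    IsSignSelection x (S ∪ T) (S.piecewise y₁ y₂) := by
  refine (h₁.congr (S.piecewise_eqOn y₁ y₂)).union (h₂.congr fun t ht => ?_) hS hT
  by_cases htS : t ∈ S
  · rw [S.piecewise_eq_of_mem _ _ htS, h ⟨htS, ht⟩]
  · exact S.piecewise_eq_of_notMem _ _ htS

theorem singleton {t : α} (hxt : x t ≠ 0) : IsSignSelection x {t} (fun _ => ‖x t‖⁻¹ • x t) :=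
  ⟨continuousOn_const, fun s hs _ => Or.inl (by rw [mem_singleton_iff.1 hs]),
    fun _ _ => norm_smul_inv_norm hxt⟩

theorem exists_apply_eq (h : IsSignSelection x S y) {t : α} {v : E}
    (hv : y t = v ∨ y t = -v) : ∃ y', IsSignSelection x S y' ∧ y' t = v := by
  rcases hv with hv | hv
  · exact ⟨y, h, hv⟩
  · exact ⟨-y, h.neg, by simp [hv]⟩

theorem apply_eq_or_eq_neg (h₁ : IsSignSelection x S y₁) (h₂ : IsSignSelection x S y₂)
    {t : α} (ht : t ∈ S) (hxt : x t ≠ 0) : y₁ t = y₂ t ∨ y₁ t = -y₂ t := by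
  rcases h₁.eq_or_eq_neg t ht hxt with h | h <;> rcases h₂.eq_or_eq_neg t ht hxt with h' | h' <;>
    simp [h, h']

/-- The relation `v = w ∨ v = -w` is closed in `E × E`, so it passes to the limit. -/
theorem apply_eq_or_eq_neg_of_eventually_ne_zero (h₁ : IsSignSelection x S y₁)
    (h₂ : IsSignSelection x S y₂) {t : α} (ht : t ∈ S) [NeBot (𝓝[S \ {t}] t)]
    (hx : ∀ᶠ s in 𝓝[S \ {t}] t, x s ≠ 0) : y₁ t = y₂ t ∨ y₁ t = -y₂ t := by
  have hC : IsClosed {p : E × E | p.1 = p.2 ∨ p.1 = -p.2} :=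
    (isClosed_eq continuous_fst continuous_snd).union
      (isClosed_eq continuous_fst continuous_snd.neg)
  have hlim : Tendsto (fun s => (y₁ s, y₂ s)) (𝓝[S \ {t}] t) (𝓝 (y₁ t, y₂ t)) :=
    ((h₁.continuousOn t ht).prodMk_nhds (h₂.continuousOn t ht)).mono_left
      (nhdsWithin_mono _ sdiff_subset)
  refine hC.mem_of_tendsto hlim ?_
  filter_upwards [hx, self_mem_nhdsWithin] with s hxs hs
  exact h₁.apply_eq_or_eq_neg h₂ hs.1 hxs

/-- `‖y₁ - y₂‖` is continuous with values in the discrete set `{0, 2}`, hence constant. -/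
theorem eqOn_of_isPreconnected (h₁ : IsSignSelection x S y₁) (h₂ : IsSignSelection x S y₂)
    (hS : IsPreconnected S) (hpm : ∀ t ∈ S, y₁ t = y₂ t ∨ y₁ t = -y₂ t) {t₀ : α} (ht₀ : t₀ ∈ S)
    (heq : y₁ t₀ = y₂ t₀) : EqOn y₁ y₂ S := by
  have hmaps : MapsTo (fun t => ‖y₁ t - y₂ t‖) S ({0, 2} : Set ℝ) := by
    intro t ht
    rcases hpm t ht with h | h
    · simp [h]
    · right
      simp only [mem_singleton_iff]
      rw [h, ← neg_add', norm_neg, ← two_smul ℝ, norm_smul, h₂.norm_eq_one t ht]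
      norm_num
  intro t ht
  have := hS.constant_of_mapsTo (Set.toFinite _).isDiscrete
    (h₁.continuousOn.sub h₂.continuousOn).norm hmaps ht ht₀
  simpa [heq, sub_eq_zero] using this

end IsSignSelection

end SignSelection

section RealAnalytic

variable {E : Type*} [NormedAddCommGroup E] [NormedSpace ℝ E] [CompleteSpace E]
  {x y₁ y₂ : ℝ → E} {I : Set ℝ} {t₀ : ℝ}

/-- Near a point where `x` is not locally zero, `x t = (t - a) ^ m • u t` with `u a ≠ 0`, and
`u / ‖u‖` is a sign selection. -/
theorem exists_isSignSelection_nhds {a : ℝ} (hx : AnalyticWithinAt ℝ x I a)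
    (hxa : ¬x =ᶠ[𝓝[I] a] 0) : ∃ U ∈ 𝓝 a, ∃ y, IsSignSelection x (I ∩ U) y := by
  obtain ⟨g, -, hxg, hg⟩ := hx.exists_analyticAt
  have hg0 : ¬∀ᶠ t in 𝓝 a, g t = 0 := fun h => hxa <| by
    filter_upwards [nhdsWithin_le_nhds h, self_mem_nhdsWithin] with t hgt ht
    rw [hxg (mem_insert_of_mem _ ht), hgt, Pi.zero_apply]
  obtain ⟨m, u, hu, hua, hgu⟩ := hg.exists_eventuallyEq_pow_smul_nonzero_iff.2 hg0
  have hU : ∀ᶠ t in 𝓝 a, g t = (t - a) ^ m • u t ∧ ContinuousAt u t ∧ u t ≠ 0 :=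
    hgu.and ((hu.eventually_analyticAt.mono fun t ht => ht.continuousAt).and
      (hu.continuousAt.eventually_ne hua))
  refine ⟨_, hU, fun t => ‖u t‖⁻¹ • u t, ⟨fun t ht => ?_, fun t ht hxt => ?_,
    fun t ht => norm_smul_inv_norm ht.2.2.2⟩⟩
  · obtain ⟨-, hut, hu0⟩ := ht.2
    exact ((hut.norm.inv₀ (norm_ne_zero_iff.2 hu0)).smul hut).continuousWithinAt
  · have hxt' : x t = (t - a) ^ m • u t := (hxg (mem_insert_of_mem _ ht.1)).trans ht.2.1
    rw [hxt'] at hxt ⊢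
    rcases inv_norm_smul_smul_eq_or_eq_neg (left_ne_zero_of_smul hxt) (u t) with h | h
    · exact Or.inl h.symm
    · exact Or.inr (by rw [h, neg_neg])

theorem IsSignSelection.eqOn_of_ordConnected (hI : IsPreconnected I) (hx : AnalyticOn ℝ x I)
    {K : Set ℝ} (hK : K.OrdConnected) (hKI : K ⊆ I) (h₁ : IsSignSelection x K y₁)
    (h₂ : IsSignSelection x K y₂) (ht₀ : t₀ ∈ K) (hxt₀ : x t₀ ≠ 0) (heq : y₁ t₀ = y₂ t₀) :
    EqOn y₁ y₂ K := by
  refine h₁.eqOn_of_isPreconnected h₂ hK.isPreconnected (fun t ht => ?_) ht₀ heq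
  by_cases hxt : x t = 0
  · have := hK.nhdsWithin_diff_singleton_neBot ht ht₀ (by rintro rfl; exact hxt₀ hxt)
    exact h₁.apply_eq_or_eq_neg_of_eventually_ne_zero h₂ ht <|
      (hx.eventually_ne_zero_of_isPreconnected hI (hKI ht₀) hxt₀ (hKI ht)).filter_mono
        (nhdsWithin_mono _ (sdiff_subset_sdiff_left hKI))
  · exact h₁.apply_eq_or_eq_neg h₂ ht hxt

theorem IsSignSelection.exists_union {S T : Set ℝ} (h₁ : IsSignSelection x S y₁)
    (h₂ : IsSignSelection x T y₂) (hI : IsPreconnected I) (hx : AnalyticOn ℝ x I)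
    (hS : IsClosed S) (hT : IsClosed T) (hSI : S ⊆ I) (hST : (S ∩ T).OrdConnected)
    (ht₀ : t₀ ∈ S ∩ T) (hxt₀ : x t₀ ≠ 0) : ∃ y, IsSignSelection x (S ∪ T) y := by
  classical
  obtain ⟨y₂', h₂', hy₂'⟩ := h₂.exists_apply_eq
    ((h₂.mono inter_subset_right).apply_eq_or_eq_neg (h₁.mono inter_subset_left) ht₀ hxt₀)
  exact ⟨_, h₁.piecewise h₂' hS hT <| (h₁.mono inter_subset_left).eqOn_of_ordConnected hI hx hST
    (inter_subset_left.trans hSI) (h₂'.mono inter_subset_right) ht₀ hxt₀ hy₂'.symm⟩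

theorem exists_mem_uIcc_ne_zero (hI : I.OrdConnected) (hx : AnalyticOn ℝ x I) (ht₀ : t₀ ∈ I)
    (hxt₀ : x t₀ ≠ 0) {p : ℝ} (hp : p ∈ I) {U : Set ℝ} (hU : U ∈ 𝓝[I] p) :
    ∃ q ∈ [[t₀, p]], q ∈ U ∧ x q ≠ 0 := by
  by_cases hxp : x p = 0
  · have hsub : [[t₀, p]] ⊆ I := hI.uIcc_subset ht₀ hp
    have := (ordConnected_uIcc (a := t₀) (b := p)).nhdsWithin_diff_singleton_neBot right_mem_uIcc
      left_mem_uIcc fun h => hxt₀ (h ▸ hxp)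
    have hU' : ∀ᶠ q in 𝓝[[[t₀, p]] \ {p}] p, q ∈ U :=
      nhdsWithin_mono _ (sdiff_subset.trans hsub) hU
    obtain ⟨q, hxq, hqU, hq⟩ :=
      (((hx.eventually_ne_zero_of_isPreconnected hI.isPreconnected ht₀ hxt₀ hp).filter_mono
        (nhdsWithin_mono _ (sdiff_subset_sdiff_left hsub))).and
        (hU'.and self_mem_nhdsWithin)).exists
    exact ⟨q, hq.1, hqU, hxq⟩
  · exact ⟨p, right_mem_uIcc, mem_of_mem_nhdsWithin hp hU, hxp⟩

/-- To glue at `p` without knowing the value of the selection at a zero of `x`, the gluing point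
is first moved to a nearby point `p'` where `x p' ≠ 0`. -/
theorem exists_isSignSelection_uIcc_of_nhdsWithin (hI : I.OrdConnected) (hx : AnalyticOn ℝ x I)
    (ht₀ : t₀ ∈ I) (hxt₀ : x t₀ ≠ 0) {p q : ℝ} (hp : p ∈ I) {U : Set ℝ} (hU : U.OrdConnected)
    (hUI : U ⊆ I) (hpU : U ∈ 𝓝[I] p) (hqU : q ∈ U) {y₀ : ℝ → E}
    (hy₀ : IsSignSelection x U y₀) {y : ℝ → E} (hy : IsSignSelection x [[t₀, p]] y) :
    ∃ y, IsSignSelection x [[t₀, q]] y := by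
  obtain ⟨p', hp', hp'U, hxp'⟩ := exists_mem_uIcc_ne_zero hI hx ht₀ hxt₀ hp hpU
  obtain ⟨z, hz⟩ := (hy.mono (uIcc_subset_uIcc_left hp')).exists_union
    (hy₀.mono (hU.uIcc_subset hp'U hqU)) hI.isPreconnected hx isClosed_Icc isClosed_Icc
    (hI.uIcc_subset ht₀ (hUI hp'U)) (ordConnected_uIcc.inter ordConnected_uIcc)
    ⟨right_mem_uIcc, left_mem_uIcc⟩ hxp'
  exact ⟨z, hz.mono uIcc_subset_uIcc_union_uIcc⟩

theorem eventually_exists_isSignSelection_uIcc_iff (hI : I.OrdConnected) (hx : AnalyticOn ℝ x I)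
    (ht₀ : t₀ ∈ I) (hxt₀ : x t₀ ≠ 0) {a : ℝ} (ha : a ∈ I) :
    ∀ᶠ q in 𝓝[I] a,
      (∃ y, IsSignSelection x [[t₀, a]] y) ↔ ∃ y, IsSignSelection x [[t₀, q]] y := by
  have hxa : ¬x =ᶠ[𝓝[I] a] 0 := fun h =>
    hxt₀ (hx.eqOn_zero_of_isPreconnected_of_eventuallyEq_zero hI.isPreconnected ha h ht₀)
  obtain ⟨V, hV, y₀, hy₀⟩ := exists_isSignSelection_nhds (hx a ha) hxa
  obtain ⟨l, u, hlu, hluV⟩ := mem_nhds_iff_exists_Ioo_subset.1 hV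
  have hU : ∀ p ∈ I ∩ Ioo l u, I ∩ Ioo l u ∈ 𝓝[I] p := fun p hp =>
    inter_mem_nhdsWithin I (isOpen_Ioo.mem_nhds hp.2)
  have hext : ∀ p ∈ I ∩ Ioo l u, ∀ q ∈ I ∩ Ioo l u, (∃ y, IsSignSelection x [[t₀, p]] y) →
      ∃ y, IsSignSelection x [[t₀, q]] y := fun p hp q hq ⟨_, hy⟩ =>
    exists_isSignSelection_uIcc_of_nhdsWithin hI hx ht₀ hxt₀ hp.1 (hI.inter ordConnected_Ioo)
      inter_subset_left (hU p hp) hq (hy₀.mono (inter_subset_inter_right I hluV)) hy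
  filter_upwards [hU a ⟨ha, hlu⟩] with q hq
  exact ⟨hext a ⟨ha, hlu⟩ q hq, hext q hq a ⟨ha, hlu⟩⟩

theorem exists_isSignSelection_uIcc (hI : I.OrdConnected) (hx : AnalyticOn ℝ x I)
    (ht₀ : t₀ ∈ I) (hxt₀ : x t₀ ≠ 0) {t : ℝ} (ht : t ∈ I) :
    ∃ y, IsSignSelection x [[t₀, t]] y := by
  refine (hI.isPreconnected.induction₂ (fun p q => (∃ y, IsSignSelection x [[t₀, p]] y) ↔
    ∃ y, IsSignSelection x [[t₀, q]] y) (fun a ha => ?_) (fun _ _ _ _ _ _ => Iff.trans)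
    (fun _ _ _ _ => Iff.symm) ht₀ ht).1 ⟨_, by simpa using IsSignSelection.singleton hxt₀⟩
  exact eventually_exists_isSignSelection_uIcc_iff hI hx ht₀ hxt₀ ha

theorem exists_isSignSelection_uIcc_of_mem (hI : I.OrdConnected) (hx : AnalyticOn ℝ x I)
    (ht₀ : t₀ ∈ I) (hxt₀ : x t₀ ≠ 0) {p q : ℝ} (hp : p ∈ I) (hq : q ∈ I) :
    ∃ y, IsSignSelection x [[p, q]] y := by
  obtain ⟨y₁, h₁⟩ := exists_isSignSelection_uIcc hI hx ht₀ hxt₀ hp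
  obtain ⟨y₂, h₂⟩ := exists_isSignSelection_uIcc hI hx ht₀ hxt₀ hq
  obtain ⟨y, hy⟩ := h₁.exists_union h₂ hI.isPreconnected hx isClosed_Icc isClosed_Icc
    (hI.uIcc_subset ht₀ hp) (ordConnected_uIcc.inter ordConnected_uIcc)
    ⟨left_mem_uIcc, left_mem_uIcc⟩ hxt₀
  rw [uIcc_comm t₀ p] at hy
  exact ⟨y, hy.mono uIcc_subset_uIcc_union_uIcc⟩

/-- The selections on `[[t₀, t]]` normalized at `t₀` agree on overlaps, so their values at the
right endpoints form a selection on `I`. -/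
theorem exists_isSignSelection (hI : I.OrdConnected) (hx : AnalyticOn ℝ x I)
    (hne : ∃ t ∈ I, x t ≠ 0) : ∃ y, IsSignSelection x I y := by
  obtain ⟨t₀, ht₀, hxt₀⟩ := hne
  have hnormalized : ∀ p ∈ I, ∀ q ∈ I, t₀ ∈ [[p, q]] →
      ∃ z, IsSignSelection x [[p, q]] z ∧ z t₀ = ‖x t₀‖⁻¹ • x t₀ := fun p hp q hq ht₀pq =>
    let ⟨z, hz⟩ := exists_isSignSelection_uIcc_of_mem hI hx ht₀ hxt₀ hp hq
    hz.exists_apply_eq (hz.eq_or_eq_neg t₀ ht₀pq hxt₀)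
  choose! Z hZ hZt₀ using fun t (ht : t ∈ I) => hnormalized t₀ ht₀ t ht left_mem_uIcc
  refine ⟨fun t => Z t t, ⟨fun t ht => ?_, fun t ht => (hZ t ht).eq_or_eq_neg t right_mem_uIcc,
    fun t ht => (hZ t ht).norm_eq_one t right_mem_uIcc⟩⟩
  obtain ⟨a, ha, b, hb, hat, htb, hab⟩ := exists_Icc_mem_nhdsWithin ht
  have hK : [[min a t₀, max b t₀]] = Icc (min a t₀) (max b t₀) :=
    uIcc_of_le (min_le_left _ _ |>.trans <| hat.trans <| htb.trans <| le_max_left _ _)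
  have ht₀K : t₀ ∈ Icc (min a t₀) (max b t₀) := ⟨min_le_right _ _, le_max_right _ _⟩
  have hIccK : Icc a b ⊆ Icc (min a t₀) (max b t₀) :=
    Icc_subset_Icc (min_le_left _ _) (le_max_left _ _)
  obtain ⟨z, hz, hzt₀⟩ := hnormalized _ (min_rec' (· ∈ I) ha ht₀) _ (max_rec' (· ∈ I) hb ht₀)
    (hK ▸ ht₀K)
  rw [hK] at hz
  have hZz : ∀ s ∈ Icc a b, Z s s = z s := fun s hs =>
    (hZ s (hI.out ha hb hs)).eqOn_of_ordConnected hI.isPreconnected hx ordConnected_uIcc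
      (hI.uIcc_subset ht₀ (hI.out ha hb hs)) (hz.mono (uIcc_subset_Icc ht₀K (hIccK hs)))
      left_mem_uIcc hxt₀ (by rw [hZt₀ s (hI.out ha hb hs), hzt₀]) right_mem_uIcc
  exact ((hz.continuousOn t (hIccK ⟨hat, htb⟩)).mono_of_mem_nhdsWithin
    (mem_of_superset hab hIccK)).congr_of_eventuallyEq (mem_of_superset hab hZz)
    (hZz t ⟨hat, htb⟩)

end RealAnalytic

/-- If x : I → ℂⁿ is real-analytic on an interval I and not identically zero, there is a
continuous y : I → ℂⁿ with y(t) = ±x(t)/‖x(t)‖ wherever x(t) ≠ 0 and ‖y(t)‖ = 1 on I. -/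
theorem continuous_sign_selection (n : ℕ) (I : Set ℝ) (hI : I.OrdConnected)
    (x : ℝ → EuclideanSpace ℂ (Fin n))
    (hx : AnalyticOn ℝ x I)
    (hne : ∃ t ∈ I, x t ≠ 0) :
    ∃ y : ℝ → EuclideanSpace ℂ (Fin n), ContinuousOn y I ∧
      (∀ t ∈ I, x t ≠ 0 → y t = ‖x t‖⁻¹ • x t ∨ y t = -(‖x t‖⁻¹ • x t)) ∧
      ∀ t ∈ I, ‖y t‖ = 1 := by
  obtain ⟨y, hy⟩ := exists_isSignSelection hI hx hne
  exact ⟨y, hy.continuousOn, hy.eq_or_eq_neg, hy.norm_eq_one⟩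
end

section
/- Elliptical Range Theorem: For any A ∈ M₂(ℂ), the numerical range F(A) is an ellipse together with its interior (possibly degenerating to a line segment or a point); in particular F(A) is the image of a Euclidean 2-sphere under a real affine map from ℝ³ to ℂ ≅ ℝ², hence a filled ellipse. -/
/-!
For `x ∈ ℂ²`, the Pauli expansion `x xᴴ = (‖x‖² • 1 + ∑ₖ rₖ σₖ) / 2` defines the Bloch vector
`r ∈ ℝ³` of `x`, so `xᴴ A x = tr (A x xᴴ) = tr A / 2 · ‖x‖² + ∑ₖ rₖ tr (A σₖ) / 2` is a real affine
function of `r` on unit vectors. The map `x ↦ r` (the Hopf map) sends the unit sphere of `ℂ²` onto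
the unit sphere of `ℝ³`: it preserves norms since `(|a|² + |b|²)² = 4 |ā b|² + (|a|² - |b|²)²`,
and `r = (u, v, t)` is hit by `(√((1 + t) / 2), √((1 - t) / 2) · e^{i arg (u + i v)})`.
-/

open Matrix Complex ComplexConjugate

noncomputable def blochVector (x : Fin 2 → ℂ) : EuclideanSpace ℝ (Fin 3) :=
  !₂[2 * (conj (x 0) * x 1).re, 2 * (conj (x 0) * x 1).im, normSq (x 0) - normSq (x 1)]

lemma star_dotProduct_self_fin_two (x : Fin 2 → ℂ) :
    star x ⬝ᵥ x = ((normSq (x 0) + normSq (x 1) : ℝ) : ℂ) := by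
  simp [dotProduct, Fin.sum_univ_two, normSq_eq_conj_mul_self]

lemma norm_blochVector (x : Fin 2 → ℂ) :
    ‖blochVector x‖ = normSq (x 0) + normSq (x 1) := by
  have hsum_sq : (2 * (conj (x 0) * x 1).re) ^ 2 + (2 * (conj (x 0) * x 1).im) ^ 2
      + (normSq (x 0) - normSq (x 1)) ^ 2 = (normSq (x 0) + normSq (x 1)) ^ 2 := by
    have h : (conj (x 0) * x 1).re ^ 2 + (conj (x 0) * x 1).im ^ 2
        = normSq (x 0) * normSq (x 1) := by
      rw [← normSq_conj (x 0), ← normSq_mul, normSq_apply]; ring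
    linear_combination 4 * h
  rw [blochVector, EuclideanSpace.norm_eq]
  simp only [Real.norm_eq_abs, sq_abs, Fin.sum_univ_three, cons_val_zero, cons_val_one, cons_val]
  rw [hsum_sq, Real.sqrt_sq (add_nonneg (normSq_nonneg _) (normSq_nonneg _))]

lemma exists_blochVector_eq {r : EuclideanSpace ℝ (Fin 3)} (hr : ‖r‖ = 1) :
    ∃ x : Fin 2 → ℂ, blochVector x = r := by
  have hr' : r 0 ^ 2 + r 1 ^ 2 + r 2 ^ 2 = 1 := by
    rw [EuclideanSpace.norm_eq, Real.sqrt_eq_one] at hr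
    simpa [Fin.sum_univ_three] using hr
  set w : ℂ := ⟨r 0, r 1⟩
  have hw : ‖w‖ ^ 2 = r 0 ^ 2 + r 1 ^ 2 := by rw [Complex.sq_norm, normSq_mk]; ring
  have hadd : 0 ≤ (1 + r 2) / 2 := by nlinarith
  have hsub : 0 ≤ (1 - r 2) / 2 := by nlinarith
  have hsqrt_mul : √((1 + r 2) / 2) * √((1 - r 2) / 2) = ‖w‖ / 2 := by
    rw [← Real.sqrt_mul hadd, ← Real.sqrt_sq (by positivity : 0 ≤ ‖w‖ / 2)]
    congr 1
    linear_combination (-hr' - hw) / 4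
  set x : Fin 2 → ℂ := ![√((1 + r 2) / 2), √((1 - r 2) / 2) * exp (arg w * I)]
  have hprod : conj (x 0) * x 1 = w / 2 := by
    simp only [x, cons_val_zero, cons_val_one]
    conv_rhs => rw [← norm_mul_exp_arg_mul_I w]
    rw [conj_ofReal, ← mul_assoc, ← ofReal_mul, hsqrt_mul]
    push_cast; ring
  refine ⟨x, ?_⟩
  ext i
  fin_cases i
  · simp [blochVector, hprod, w, mul_div_cancel₀]
  · simp [blochVector, hprod, w, mul_div_cancel₀]
  · have hexp : normSq (exp (arg w * I)) = 1 := by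
      rw [normSq_eq_norm_sq, norm_exp_ofReal_mul_I, one_pow]
    simp only [blochVector, Fin.reduceFinMk, cons_val, x, cons_val_zero, cons_val_one, normSq_mul,
      normSq_ofReal, hexp, mul_one, Real.mul_self_sqrt hadd, Real.mul_self_sqrt hsub]
    ring

lemma blochVector_image_eq_sphere :
    blochVector '' {x | star x ⬝ᵥ x = 1} = Metric.sphere 0 1 := by
  ext r
  simp only [Set.mem_image, Set.mem_ofPred_eq, mem_sphere_zero_iff_norm]
  constructor
  · rintro ⟨x, hx, rfl⟩
    rw [star_dotProduct_self_fin_two] at hx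
    rw [norm_blochVector]; exact_mod_cast hx
  · intro hr
    obtain ⟨x, rfl⟩ := exists_blochVector_eq hr
    refine ⟨x, ?_, rfl⟩
    rw [star_dotProduct_self_fin_two, ← norm_blochVector, hr, ofReal_one]

/-- `tr (A σₖ) / 2` for the Pauli matrices `σ₁, σ₂, σ₃`. -/
noncomputable def pauliCoeff (A : Matrix (Fin 2) (Fin 2) ℂ) : Fin 3 → ℂ :=
  ![(A 0 1 + A 1 0) / 2, I * (A 0 1 - A 1 0) / 2, (A 0 0 - A 1 1) / 2]

noncomputable def pauliForm (A : Matrix (Fin 2) (Fin 2) ℂ) : EuclideanSpace ℝ (Fin 3) →L[ℝ] ℂ :=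
  ∑ k, (EuclideanSpace.proj k).smulRight (pauliCoeff A k)

lemma pauliForm_apply (A : Matrix (Fin 2) (Fin 2) ℂ) (r : EuclideanSpace ℝ (Fin 3)) :
    pauliForm A r = ∑ k, r k • pauliCoeff A k := by
  simp [pauliForm]

lemma star_dotProduct_mulVec_eq (A : Matrix (Fin 2) (Fin 2) ℂ) (x : Fin 2 → ℂ) :
    star x ⬝ᵥ (A *ᵥ x) = pauliForm A (blochVector x) + A.trace / 2 * (star x ⬝ᵥ x) := by
  have hre : ((2 * (conj (x 0) * x 1).re : ℝ) : ℂ) = conj (x 0) * x 1 + x 0 * conj (x 1) := by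
    rw [← add_conj]; simp [mul_comm]
  have him : ((2 * (conj (x 0) * x 1).im : ℝ) : ℂ) * I = conj (x 0) * x 1 - x 0 * conj (x 1) := by
    rw [← sub_conj]; simp [mul_comm]
  simp only [pauliForm_apply, blochVector, Fin.sum_univ_three, cons_val_zero, cons_val_one,
    cons_val, real_smul, pauliCoeff, ofReal_sub, normSq_eq_conj_mul_self, trace, dotProduct,
    mulVec, Fin.sum_univ_two, Pi.star_apply, RCLike.star_def, diag_apply]
  linear_combination (-(A 0 1 + A 1 0) / 2) * hre - (A 0 1 - A 1 0) / 2 * him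

/-- Elliptical Range Theorem: for A ∈ M₂(ℂ), the numerical range F(A) is the image of the
Euclidean unit 2-sphere in ℝ³ under a real affine map into ℂ, hence a filled ellipse
(possibly degenerating to a segment or point). -/
theorem elliptical_range_theorem (A : Matrix (Fin 2) (Fin 2) ℂ) :
    ∃ (L : EuclideanSpace ℝ (Fin 3) →L[ℝ] ℂ) (c : ℂ),
      {z : ℂ | ∃ x : Fin 2 → ℂ, star x ⬝ᵥ x = 1 ∧ star x ⬝ᵥ (A *ᵥ x) = z} =
        (fun r => L r + c) '' Metric.sphere (0 : EuclideanSpace ℝ (Fin 3)) 1 := by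
  refine ⟨pauliForm A, A.trace / 2, ?_⟩
  rw [← blochVector_image_eq_sphere, Set.image_image]
  ext z
  simp only [Set.mem_ofPred_eq, Set.mem_image]
  refine exists_congr fun x => and_congr_right fun hx => ?_
  rw [star_dotProduct_mulVec_eq, hx, mul_one]
end

section
/- Let x, y ∈ ℂ² be unit vectors with x*y ≠ 0 and |x*y| < 1, and set β = (y*x)/|x*y| and v = (√2/2)(x + iβ(y − (x*y)x)/‖y − (x*y)x‖). Then |x*v| = √2/2 and y*v = (√2/2)(y*x + iβ√(1 − |x*y|²)), so |y*v| = √2/2; consequently the rank-one projection vv* satisfies ⟨vv*, xx*⟩ = ⟨vv*, yy*⟩ = 1/2. -/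
/-!
With `a = x*y`, the vector `w = y - a x` is orthogonal to `x` and `w*w = y*w = 1 - |a|²`. Hence
`x*v = √2/2`, while `y*v = (√2/2)(y*x + iβ‖w‖) = (√2/2) β (|a| + i√(1 - |a|²))` is `√2/2` times a
product of two complex numbers of modulus one.
-/

open Matrix

section GramSchmidt

variable {𝕜 n : Type*} [RCLike 𝕜] [Fintype n] {x y : n → 𝕜}

theorem star_dotProduct_sub_smul_eq_zero (hx : star x ⬝ᵥ x = 1) (y : n → 𝕜) :
    star x ⬝ᵥ (y - (star x ⬝ᵥ y) • x) = 0 := by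
  simp [dotProduct_sub, dotProduct_smul, hx]

theorem star_dotProduct_sub_smul_eq_one_sub_norm_sq (hy : star y ⬝ᵥ y = 1) :
    star y ⬝ᵥ (y - (star x ⬝ᵥ y) • x) = 1 - (‖star x ⬝ᵥ y‖ : 𝕜) ^ 2 := by
  rw [dotProduct_sub, dotProduct_smul, hy, smul_eq_mul, star_dotProduct y x, ← RCLike.mul_conj]
  rfl

theorem star_sub_smul_dotProduct_sub_smul (hx : star x ⬝ᵥ x = 1) (hy : star y ⬝ᵥ y = 1) :
    star (y - (star x ⬝ᵥ y) • x) ⬝ᵥ (y - (star x ⬝ᵥ y) • x) = 1 - (‖star x ⬝ᵥ y‖ : 𝕜) ^ 2 := by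
  rw [star_sub, sub_dotProduct, star_smul, smul_dotProduct, star_dotProduct_sub_smul_eq_zero hx,
    smul_zero, sub_zero, star_dotProduct_sub_smul_eq_one_sub_norm_sq hy]

open scoped ComplexOrder in
theorem norm_star_dotProduct_le_one (hx : star x ⬝ᵥ x = 1) (hy : star y ⬝ᵥ y = 1) :
    ‖star x ⬝ᵥ y‖ ≤ 1 := by
  have h := dotProduct_star_self_nonneg (y - (star x ⬝ᵥ y) • x)
  rw [star_sub_smul_dotProduct_sub_smul hx hy, ← RCLike.ofReal_pow, ← RCLike.ofReal_one,
    ← RCLike.ofReal_sub, RCLike.ofReal_nonneg, sub_nonneg] at h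
  exact (pow_le_one_iff_of_nonneg (norm_nonneg _) two_ne_zero).mp h

end GramSchmidt

theorem Complex.norm_ofReal_add_I_mul_sqrt_one_sub_sq {r : ℝ} (hr : |r| ≤ 1) :
    ‖(r : ℂ) + I * (√(1 - r ^ 2) : ℝ)‖ = 1 := by
  have : r ^ 2 ≤ 1 := by nlinarith [abs_nonneg r, sq_abs r]
  rw [mul_comm, Complex.norm_add_mul_I, Real.sq_sqrt (sub_nonneg.mpr this), add_sub_cancel,
    Real.sqrt_one]

theorem Complex.norm_star_div_norm {a : ℂ} (ha : a ≠ 0) : ‖star a / (‖a‖ : ℂ)‖ = 1 := by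
  rw [norm_div, norm_star, Complex.norm_real, norm_norm, div_self (norm_ne_zero_iff.mpr ha)]

theorem Complex.norm_star_add_I_mul_star_div_norm_mul_sqrt {a : ℂ} (ha : a ≠ 0) (h1 : ‖a‖ ≤ 1) :
    ‖star a + I * (star a / ‖a‖) * (√(1 - ‖a‖ ^ 2) : ℝ)‖ = 1 := by
  have hfactor : star a + I * (star a / ‖a‖) * (√(1 - ‖a‖ ^ 2) : ℝ) =
      star a / ‖a‖ * (‖a‖ + I * (√(1 - ‖a‖ ^ 2) : ℝ)) := by
    have : (‖a‖ : ℂ) ≠ 0 := by exact_mod_cast norm_ne_zero_iff.mpr ha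
    field_simp
  rw [hfactor, norm_mul, norm_star_div_norm ha,
    norm_ofReal_add_I_mul_sqrt_one_sub_sq ((abs_norm a).trans_le h1), one_mul]

theorem orthogonal_axis_vector_general (x y : Fin 2 → ℂ)
    (hx : star x ⬝ᵥ x = 1) (hy : star y ⬝ᵥ y = 1)
    (hne : star x ⬝ᵥ y ≠ 0) :
    let β : ℂ := (star y ⬝ᵥ x) / ((‖star x ⬝ᵥ y‖ : ℝ) : ℂ)
    let w : Fin 2 → ℂ := y - (star x ⬝ᵥ y) • x
    let nw : ℝ := Real.sqrt ((star w ⬝ᵥ w).re)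
    let v : Fin 2 → ℂ := (Real.sqrt 2 / 2 : ℝ) • (x + (Complex.I * β / (nw : ℂ)) • w)
    ‖star x ⬝ᵥ v‖ = Real.sqrt 2 / 2 ∧
    star y ⬝ᵥ v = ((Real.sqrt 2 / 2 : ℝ) : ℂ) *
      (star y ⬝ᵥ x + Complex.I * β *
        ((Real.sqrt (1 - ‖star x ⬝ᵥ y‖ ^ 2) : ℝ) : ℂ)) ∧
    ‖star y ⬝ᵥ v‖ = Real.sqrt 2 / 2 ∧
    ‖star v ⬝ᵥ x‖ ^ 2 = 1 / 2 ∧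
    ‖star v ⬝ᵥ y‖ ^ 2 = 1 / 2 := by
  intro β w nw v
  have hle : ‖star x ⬝ᵥ y‖ ≤ 1 := norm_star_dotProduct_le_one hx hy
  have hr : ‖star x ⬝ᵥ y‖ ^ 2 ≤ 1 := pow_le_one₀ (norm_nonneg _) hle
  have hnw : nw = √(1 - ‖star x ⬝ᵥ y‖ ^ 2) := by
    simp only [nw, w, star_sub_smul_dotProduct_sub_smul hx hy]
    norm_cast
  have hyw : star y ⬝ᵥ w = (nw : ℂ) ^ 2 := by
    have : nw ^ 2 = 1 - ‖star x ⬝ᵥ y‖ ^ 2 := by rw [hnw, Real.sq_sqrt (sub_nonneg.mpr hr)]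
    rw [star_dotProduct_sub_smul_eq_one_sub_norm_sq hy, ← RCLike.ofReal_pow, ← RCLike.ofReal_one,
      ← RCLike.ofReal_sub, ← this]
    exact Complex.ofReal_pow nw 2
  have hxv : star x ⬝ᵥ v = (√2 / 2 : ℝ) := by
    simp [v, dotProduct_add, dotProduct_smul, hx, w]
  have hyv : star y ⬝ᵥ v = (√2 / 2 : ℝ) * (star y ⬝ᵥ x + Complex.I * β * nw) := by
    simp only [v, dotProduct_smul, dotProduct_add, smul_eq_mul, Complex.real_smul, hyw]
    rcases eq_or_ne (nw : ℂ) 0 with h | h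
    · simp [h]
    · field_simp
  have hnorm : ‖star y ⬝ᵥ x + Complex.I * β * nw‖ = 1 := by
    simp only [β, hnw]
    rw [star_dotProduct y x]
    exact Complex.norm_star_add_I_mul_star_div_norm_mul_sqrt hne hle
  have hc : ‖((√2 / 2 : ℝ) : ℂ)‖ = √2 / 2 := by
    rw [Complex.norm_real, Real.norm_of_nonneg (by positivity)]
  have hxv_norm : ‖star x ⬝ᵥ v‖ = √2 / 2 := by rw [hxv, hc]
  have hyv_norm : ‖star y ⬝ᵥ v‖ = √2 / 2 := by rw [hyv, norm_mul, hnorm, hc, mul_one]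
  refine ⟨hxv_norm, hnw ▸ hyv, hyv_norm, ?_, ?_⟩
  · rw [star_dotProduct, norm_star, hxv_norm, div_pow, Real.sq_sqrt zero_le_two]; norm_num
  · rw [star_dotProduct, norm_star, hyv_norm, div_pow, Real.sq_sqrt zero_le_two]; norm_num

/-- For unit vectors x, y ∈ ℂ² with 0 < |x*y| < 1, β = (y*x)/|x*y| and
v = (√2/2)(x + iβ(y − (x*y)x)/‖y − (x*y)x‖), one has |x*v| = √2/2,
y*v = (√2/2)(y*x + iβ√(1−|x*y|²)), hence |y*v| = √2/2; consequently
⟨vv*, xx*⟩ = |v*x|² = 1/2 and ⟨vv*, yy*⟩ = |v*y|² = 1/2. -/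
theorem orthogonal_axis_vector (x y : Fin 2 → ℂ)
    (hx : star x ⬝ᵥ x = 1) (hy : star y ⬝ᵥ y = 1)
    (hne : star x ⬝ᵥ y ≠ 0) (hlt : ‖star x ⬝ᵥ y‖ < 1) :
    let β : ℂ := (star y ⬝ᵥ x) / ((‖star x ⬝ᵥ y‖ : ℝ) : ℂ)
    let w : Fin 2 → ℂ := y - (star x ⬝ᵥ y) • x
    let nw : ℝ := Real.sqrt ((star w ⬝ᵥ w).re)
    let v : Fin 2 → ℂ := (Real.sqrt 2 / 2 : ℝ) • (x + (Complex.I * β / (nw : ℂ)) • w)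
    ‖star x ⬝ᵥ v‖ = Real.sqrt 2 / 2 ∧
    star y ⬝ᵥ v = ((Real.sqrt 2 / 2 : ℝ) : ℂ) *
      (star y ⬝ᵥ x + Complex.I * β *
        ((Real.sqrt (1 - ‖star x ⬝ᵥ y‖ ^ 2) : ℝ) : ℂ)) ∧
    ‖star y ⬝ᵥ v‖ = Real.sqrt 2 / 2 ∧
    ‖star v ⬝ᵥ x‖ ^ 2 = 1 / 2 ∧
    ‖star v ⬝ᵥ y‖ ^ 2 = 1 / 2 :=
  orthogonal_axis_vector_general x y hx hy hne
end
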